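/- arXiv:2012.02427 — 8 statements merged into one kernel-verified Lean document; each statement's English description precedes it below -/
import Mathlib

section
/- Let f : {1,...,N} → ℝ be discretely convex (f(i+1)+f(i-1) ≥ 2f(i) for interior i). Let a < b in {1,...,N} and suppose |f(a) - f(b)| ≤ ε/2 and that every minimizer of f over {1,...,N} lies in {1,...,a-1} ∪ {b+1,...,N}, and moreover a - 1 ≤ b - a (i.e., a is at most the left 3-quantile position). If all minimizers lie to the left of a, then min f ≥ f(a) - ε/2, and consequently max(f(a), f(b)) ≤ min f + ε. -/
/-- For a discretely convex f on {1,...,N}, if a < b, |f(a)-f(b)| ≤ ε/2,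
a - 1 ≤ b - a, and every minimizer of f lies strictly to the left of a, then
min f ≥ f(a) - ε/2 and consequently max(f(a), f(b)) ≤ min f + ε. -/
theorem stmt_2 (N a b : ℕ) (ε : ℝ) (hε : 0 < ε) (f : ℕ → ℝ)
    (hconv : ∀ i, 2 ≤ i → i ≤ N - 1 → 2 * f i ≤ f (i + 1) + f (i - 1))
    (ha : 1 ≤ a) (hab : a < b) (hbN : b ≤ N)
    (hclose : |f a - f b| ≤ ε / 2)
    (hquant : a - 1 ≤ b - a)
    (hminleft : ∀ x, 1 ≤ x → x ≤ N → (∀ y, 1 ≤ y → y ≤ N → f x ≤ f y) → x < a) :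
    (∀ x, 1 ≤ x → x ≤ N → f a - ε / 2 ≤ f x) ∧
    (∀ x, 1 ≤ x → x ≤ N → max (f a) (f b) ≤ f x + ε) := by
  -- monotonicity of differences
  have mono : ∀ j, ∀ i, 1 ≤ i → i ≤ j → j ≤ N - 1 →
      f (i + 1) - f i ≤ f (j + 1) - f j := by
    intro j
    induction j with
    | zero => intro i h1 h2 _; omega
    | succ j ih =>
      intro i h1 h2 hj
      rcases Nat.lt_or_ge i (j + 1) with h | h
      · have hstep : f (j + 1) - f j ≤ f (j + 2) - f (j + 1) := by
          have := hconv (j + 1) (by omega) hj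
          have hj1 : j + 1 - 1 = j := by omega
          rw [hj1] at this
          linarith
        have := ih i h1 (by omega) (by omega)
        linarith
      · have : i = j + 1 := by omega
        subst this; rfl
  have haN : a ≤ N - 1 := by omega
  -- Claim A: f a - f (a - k) ≤ k * (f a - f (a-1))
  have claimA : ∀ k, k ≤ a - 1 → f a - f (a - k) ≤ (k : ℝ) * (f a - f (a - 1)) := by
    intro k
    induction k with
    | zero => intro _; simp
    | succ k ih =>
      intro hk
      have h1 := ih (by omega)
      have hgap : f (a - k) - f (a - (k + 1)) ≤ f a - f (a - 1) := by
        have := mono (a - 1) (a - (k + 1)) (by omega) (by omega) (by omega)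
        have e1 : a - (k + 1) + 1 = a - k := by omega
        have e2 : a - 1 + 1 = a := by omega
        rw [e1, e2] at this
        exact this
      push_cast
      linarith
  -- Claim B: (b - a) * (f (a+1) - f a) ≤ f b - f a
  have claimB : ∀ m, a + m ≤ b → (m : ℝ) * (f (a + 1) - f a) ≤ f (a + m) - f a := by
    intro m
    induction m with
    | zero => intro _; simp
    | succ m ih =>
      intro hm
      have h1 := ih (by omega)
      have hgap : f (a + 1) - f a ≤ f (a + m + 1) - f (a + m) := by
        exact mono (a + m) a ha (by omega) (by omega)
      have e : a + (m + 1) = a + m + 1 := by omega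
      rw [e]
      push_cast
      linarith
  have hfbfa : f b - f a ≤ ε / 2 := by
    have := abs_le.mp hclose
    linarith [this.1]
  have hfafb : f a - f b ≤ ε / 2 := by
    have := abs_le.mp hclose
    linarith [this.2]
  -- key: for 1 ≤ x ≤ a, f a - f x ≤ ε/2
  have hkey : ∀ x, 1 ≤ x → x ≤ a → f a - f x ≤ ε / 2 := by
    intro x hx1 hxa
    rcases Nat.lt_or_ge x a with hlt | hge
    · have ha2 : 2 ≤ a := by omega
      set d' := f (a + 1) - f a with hd'
      have hdd' : f a - f (a - 1) ≤ d' := by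
        have := mono a (a - 1) (by omega) (by omega) haN
        have e2 : a - 1 + 1 = a := by omega
        rw [e2] at this
        exact this
      have hA := claimA (a - x) (by omega)
      have ex : a - (a - x) = x := by omega
      rw [ex] at hA
      have hB := claimB (b - a) (by omega)
      have eb : a + (b - a) = b := by omega
      rw [eb] at hB
      -- f a - f x ≤ (a-x) d ≤ (a-x) d'
      have hax : (↑(a - x) : ℝ) ≤ (↑(b - a) : ℝ) := by
        have : a - x ≤ b - a := by omega
        exact_mod_cast this
      have haxpos : (0 : ℝ) ≤ (↑(a - x) : ℝ) := by positivity
      have h2 : f a - f x ≤ (↑(a - x) : ℝ) * d' := by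
        calc f a - f x ≤ (↑(a - x) : ℝ) * (f a - f (a - 1)) := hA
          _ ≤ (↑(a - x) : ℝ) * d' := by
            exact mul_le_mul_of_nonneg_left hdd' haxpos
      rcases le_or_gt d' 0 with hd0 | hd0
      · have : (↑(a - x) : ℝ) * d' ≤ 0 := mul_nonpos_of_nonneg_of_nonpos haxpos hd0
        linarith
      · have h3 : (↑(a - x) : ℝ) * d' ≤ (↑(b - a) : ℝ) * d' :=
          mul_le_mul_of_nonneg_right hax (le_of_lt hd0)
        linarith
    · have : x = a := by omega
      rw [this]; linarith
  -- existence of a minimizer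
  have hN1 : 1 ≤ N := by omega
  have hne : (Finset.Icc 1 N).Nonempty := ⟨1, by simp [hN1]⟩
  obtain ⟨m, hm, hmin⟩ := Finset.exists_min_image (Finset.Icc 1 N) f hne
  simp only [Finset.mem_Icc] at hm
  have hmin' : ∀ y, 1 ≤ y → y ≤ N → f m ≤ f y := by
    intro y h1 h2
    exact hmin y (Finset.mem_Icc.mpr ⟨h1, h2⟩)
  have hma : m < a := hminleft m hm.1 hm.2 hmin'
  have hfm : f a - ε / 2 ≤ f m := by
    have := hkey m hm.1 (by omega)
    linarith
  constructor
  · intro x hx1 hx2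
    have := hmin' x hx1 hx2
    linarith
  · intro x hx1 hx2
    have h1 := hmin' x hx1 hx2
    have h2 : f a ≤ f x + ε := by linarith
    have h3 : f b ≤ f x + ε := by linarith
    exact max_le h2 h3
end

section
/- Let f : {1,...,N} → ℝ be discretely convex with a unique minimizer x*, and suppose f(x) ≥ f(x*) + c for all x ≠ x* (indifference zone parameter c > 0). Let a < b in {1,...,N}. If x* ∉ {a,...,b}, then |f(a) - f(b)| ≥ (b - a)·c. -/
/-- For a discretely convex f on {1,...,N} with unique minimizer x*
separated by an indifference-zone gap c > 0, if a < b in {1,...,N} and x* is not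
in {a,...,b}, then |f(a) - f(b)| ≥ (b-a)·c. -/
theorem stmt_3 (N : ℕ) (c : ℝ) (hc : 0 < c) (f : ℕ → ℝ) (xstar : ℕ)
    (hconv : ∀ i, 2 ≤ i → i ≤ N - 1 → 2 * f i ≤ f (i + 1) + f (i - 1))
    (hx1 : 1 ≤ xstar) (hxN : xstar ≤ N)
    (hmin : ∀ x, 1 ≤ x → x ≤ N → f xstar ≤ f x)
    (hgap : ∀ x, 1 ≤ x → x ≤ N → x ≠ xstar → f xstar + c ≤ f x)
    (a b : ℕ) (ha : 1 ≤ a) (hab : a < b) (hbN : b ≤ N)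
    (hnot : ¬ (a ≤ xstar ∧ xstar ≤ b)) :
    ((b : ℝ) - (a : ℝ)) * c ≤ |f a - f b| := by
  push_neg at hnot
  rcases le_or_gt a xstar with hax | hax
  · -- b < xstar : decreasing case
    have hbx : b < xstar := hnot hax
    -- step lemma: for 1 ≤ j with j+1 ≤ xstar, f (j+1) + c ≤ f j
    have dec : ∀ k j, j + 1 + k = xstar → 1 ≤ j → f (j + 1) + c ≤ f j := by
      intro k
      induction k with
      | zero =>
        intro j hj hj1
        have hjx : j ≠ xstar := by omega
        have := hgap j hj1 (by omega) hjx
        have : f xstar + c ≤ f j := this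
        simpa [show j + 1 = xstar by omega] using this
      | succ k ih =>
        intro j hj hj1
        have h1 := ih (j + 1) (by omega) (by omega)
        have h2 := hconv (j + 1) (by omega) (by omega)
        simp only [Nat.add_sub_cancel] at h2
        linarith
    -- sum: for j + k = b with a ≤ j, f b + k*c ≤ f j
    have sum : ∀ k j, j + k = b → a ≤ j → f b + (k : ℝ) * c ≤ f j := by
      intro k
      induction k with
      | zero => intro j hj _; simp [show j = b by omega]
      | succ k ih =>
        intro j hj haj
        have h1 := ih (j + 1) (by omega) (by omega)
        have h2 := dec (xstar - j - 1) j (by omega) (by omega)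
        push_cast
        linarith
    have := sum (b - a) a (by omega) le_rfl
    have hcast : ((b - a : ℕ) : ℝ) = (b : ℝ) - (a : ℝ) := by
      push_cast [Nat.cast_sub (le_of_lt hab)]; ring
    rw [hcast] at this
    have := le_abs_self (f a - f b)
    linarith
  · -- xstar < a : increasing case
    have inc : ∀ k j, xstar + k = j → j + 1 ≤ N → f j + c ≤ f (j + 1) := by
      intro k
      induction k with
      | zero =>
        intro j hj hjN
        subst hj
        exact hgap (xstar + 1) (by omega) hjN (by omega)
      | succ k ih =>
        intro j hj hjN
        have h1 := ih (j - 1) (by omega) (by omega)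
        have h2 := hconv j (by omega) (by omega)
        rw [show j - 1 + 1 = j by omega] at h1
        linarith
    have sum : ∀ k j, a + k = j → j ≤ b → f a + (k : ℝ) * c ≤ f j := by
      intro k
      induction k with
      | zero => intro j hj _; simp [show j = a by omega]
      | succ k ih =>
        intro j hj hjb
        have h1 := ih (j - 1) (by omega) (by omega)
        have h2 := inc (j - 1 - xstar) (j - 1) (by omega) (by omega)
        rw [show j - 1 + 1 = j by omega] at h2
        push_cast
        linarith
    have := sum (b - a) b (by omega) le_rfl
    have hcast : ((b - a : ℕ) : ℝ) = (b : ℝ) - (a : ℝ) := by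
      push_cast [Nat.cast_sub (le_of_lt hab)]; ring
    rw [hcast] at this
    rw [abs_sub_comm]
    have := le_abs_self (f b - f a)
    linarith
end

section
/- Let h : [1, M+a] → ℝ be convex, where M ≥ 3 is an integer and a ∈ [0,1]. Then the restriction of h to the integers {1,...,M} is discretely convex; moreover, if max_{x∈{1,...,M}} h(x) - min_{x∈{1,...,M}} h(x) ≤ (M/20)·ε for some ε > 0, then min over odd integers 2y-1 with y ∈ {1,...,⌈M/2⌉} of h(2y-1) minus the infimum of h over [1, M+a] is at most ε/2. -/
/-!
Let `b = Mε/20` bound the spread of `h` on the grid `{1, …, M}` and let `i` be a grid minimiser.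
Slopes of a convex function increase, so comparing with the end of the grid farther from `i`
shows that the neighbours of `i`, one of which is odd when `i` is even, exceed `h i` by at most
`2b/(M-1)`. Likewise, on each unit cell (and on `[M, M+a]`) the function can fall below the
adjacent grid value only by extrapolating a chord of length at least `(M-2)/2` whose drop is at
most `b`, hence by at most `2b/(M-2)`. For `M ≥ 3` the two errors add up to at most `ε/2`.
-/

open Set

theorem ConvexOn.mul_sub_le_mul_sub {𝕜 : Type*} [Field 𝕜] [LinearOrder 𝕜] [IsStrictOrderedRing 𝕜]
    {s : Set 𝕜} {f : 𝕜 → 𝕜} (hf : ConvexOn 𝕜 s f) {x y z : 𝕜} (hx : x ∈ s) (hz : z ∈ s)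
    (hxy : x ≤ y) (hyz : y ≤ z) : (z - y) * (f y - f x) ≤ (y - x) * (f z - f y) := by
  rcases hxy.eq_or_lt with rfl | hxy
  · simp
  rcases hyz.eq_or_lt with rfl | hyz
  · simp
  linarith [hf.secant_mono_aux1 hx hz hxy hyz]

lemma mul_le_of_le_of_mul_le {K k e b : ℝ} (hb : 0 ≤ b) (hK : 0 ≤ K) (hKk : K ≤ k)
    (hke : k * e ≤ b) : K * e ≤ b := by
  rcases le_or_gt e 0 with he | he
  · nlinarith
  · nlinarith

lemma exists_nat_le_le_add_one {M : ℕ} (hM : 1 ≤ M) {x : ℝ} (h1 : 1 ≤ x) (hxM : x ≤ M + 1) :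
    ∃ j : ℕ, 1 ≤ j ∧ j ≤ M ∧ (j : ℝ) ≤ x ∧ x ≤ j + 1 := by
  refine ⟨min ⌊x⌋₊ M, le_min (Nat.le_floor (by exact_mod_cast h1)) hM, min_le_right _ _, ?_, ?_⟩
  · exact (Nat.cast_le.mpr (min_le_left _ _)).trans (Nat.floor_le (by linarith))
  · rcases min_choice ⌊x⌋₊ M with hj | hj <;> rw [hj]
    · exact (Nat.lt_floor_add_one x).le
    · exact hxM

lemma natCast_mem_Icc_of_mem_Icc {M n : ℕ} {c : ℝ} (hn : n ∈ Finset.Icc 1 M) (hMc : (M : ℝ) ≤ c) :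
    (n : ℝ) ∈ Icc 1 c := by
  rw [Finset.mem_Icc] at hn
  exact ⟨by exact_mod_cast hn.1, (Nat.cast_le.mpr hn.2).trans hMc⟩

section Grid

variable {f : ℝ → ℝ} {M : ℕ} {b c : ℝ}

lemma exists_odd_grid_point_mul_sub_le (hf : ConvexOn ℝ (Icc 1 c) f) (hMc : (M : ℝ) ≤ c)
    (hgap : ∀ m ∈ Finset.Icc 1 M, ∀ n ∈ Finset.Icc 1 M, f m - f n ≤ b)
    {i : ℕ} (hi : i ∈ Finset.Icc 1 M) :
    ∃ p ∈ Finset.Icc 1 M, p % 2 = 1 ∧ ((M : ℝ) - 1) * (f p - f i) ≤ 2 * b := by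
  have hb : 0 ≤ b := by simpa using hgap i hi i hi
  have hmem : ∀ n ∈ Finset.Icc 1 M, (n : ℝ) ∈ Icc 1 c := fun n hn =>
    natCast_mem_Icc_of_mem_Icc hn hMc
  have hM : (1 : ℕ) ∈ Finset.Icc 1 M ∧ M ∈ Finset.Icc 1 M := by
    simp only [Finset.mem_Icc] at hi ⊢; omega
  rcases Nat.mod_two_eq_zero_or_one i with heven | hodd
  swap
  · exact ⟨i, hi, hodd, by simpa using mul_nonneg zero_le_two hb⟩
  rw [Finset.mem_Icc] at hi
  have hi2 : (2 : ℝ) ≤ i := by exact_mod_cast (show 2 ≤ i by omega)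
  have hiM : (i : ℝ) ≤ M := by exact_mod_cast hi.2
  rcases le_or_gt (2 * i) (M + 1) with hup | hdown
  · have hi1M : (i : ℝ) + 1 ≤ M := by exact_mod_cast (show i + 1 ≤ M by omega)
    have hup' : 2 * (i : ℝ) ≤ M + 1 := by exact_mod_cast hup
    refine ⟨i + 1, Finset.mem_Icc.mpr ⟨by omega, by omega⟩, by omega, ?_⟩
    have hslope := hf.mul_sub_le_mul_sub (hmem i (Finset.mem_Icc.mpr hi)) (hmem M hM.2)
      (le_add_of_nonneg_right zero_le_one) hi1M
    have hgM := hgap M hM.2 i (Finset.mem_Icc.mpr hi)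
    push_cast
    refine mul_le_of_le_of_mul_le (k := 2 * ((M : ℝ) - i)) (by positivity) (by linarith)
      (by linarith) ?_
    linarith
  · have hdown' : (M : ℝ) + 2 ≤ 2 * i := by exact_mod_cast hdown
    refine ⟨i - 1, Finset.mem_Icc.mpr ⟨by omega, by omega⟩, by omega, ?_⟩
    have hslope := hf.mul_sub_le_mul_sub (hmem 1 hM.1) (hmem i (Finset.mem_Icc.mpr hi))
      (y := (i : ℝ) - 1) (by push_cast; linarith) (by linarith)
    have hg1 := hgap 1 hM.1 i (Finset.mem_Icc.mpr hi)
    push_cast [Nat.cast_sub (show 1 ≤ i by omega)] at hslope hg1 ⊢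
    refine mul_le_of_le_of_mul_le (k := 2 * ((i : ℝ) - 1)) (by positivity) (by linarith)
      (by linarith) ?_
    linarith

lemma exists_grid_point_mul_sub_le (hf : ConvexOn ℝ (Icc 1 c) f) (hMc : (M : ℝ) ≤ c)
    (hcM : c ≤ M + 1) (hM : 3 ≤ M) (hgap : ∀ m ∈ Finset.Icc 1 M, ∀ n ∈ Finset.Icc 1 M, f m - f n ≤ b)
    {x : ℝ} (hx : x ∈ Icc 1 c) :
    ∃ n ∈ Finset.Icc 1 M, ((M : ℝ) - 2) * (f n - f x) ≤ 2 * b := by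
  have h1 : 1 ∈ Finset.Icc 1 M := Finset.mem_Icc.mpr ⟨le_rfl, by omega⟩
  have hM' : M ∈ Finset.Icc 1 M := Finset.mem_Icc.mpr ⟨by omega, le_rfl⟩
  have hb : 0 ≤ b := by simpa using hgap 1 h1 1 h1
  have hM3 : (3 : ℝ) ≤ M := by exact_mod_cast hM
  obtain ⟨j, hj1, hjM, hjx, hxj⟩ :=
    exists_nat_le_le_add_one (by omega : 1 ≤ M) hx.1 (hx.2.trans hcM)
  rcases le_or_gt M (2 * j) with hfar | hnear
  · have hj : j ∈ Finset.Icc 1 M := Finset.mem_Icc.mpr ⟨hj1, hjM⟩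
    have hfar' : (M : ℝ) ≤ 2 * j := by exact_mod_cast hfar
    have hslope := hf.mul_sub_le_mul_sub (natCast_mem_Icc_of_mem_Icc h1 hMc) hx
      (y := j) (by exact_mod_cast hj1) hjx
    have hstep := mul_le_of_le_of_mul_le (K := x - j) (k := 1) hb (by linarith) (by linarith)
      ((one_mul _).le.trans (hgap 1 h1 j hj))
    refine ⟨j, hj, mul_le_of_le_of_mul_le (k := 2 * ((j : ℝ) - 1)) (by linarith) (by linarith)
      (by linarith) ?_⟩
    push_cast at hslope hstep
    linarith
  · have hj : j + 1 ∈ Finset.Icc 1 M := Finset.mem_Icc.mpr ⟨by omega, by omega⟩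
    have hnear' : 2 * (j : ℝ) + 1 ≤ M := by exact_mod_cast hnear
    have hslope := hf.mul_sub_le_mul_sub hx (natCast_mem_Icc_of_mem_Icc hM' hMc)
      (y := j + 1) hxj (by linarith)
    have hstep := mul_le_of_le_of_mul_le (K := j + 1 - x) (k := 1) hb (by linarith)
      (by linarith) ((one_mul _).le.trans (hgap M hM' (j + 1) hj))
    refine ⟨j + 1, hj, mul_le_of_le_of_mul_le (k := 2 * ((M : ℝ) - (j + 1))) (by linarith)
      (by linarith) (by linarith) ?_⟩
    push_cast at hslope hstep ⊢
    linarith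

end Grid

lemma add_le_half_of_mul_le {M A B ε : ℝ} (hM : 3 ≤ M) (hε : 0 ≤ ε)
    (hA : (M - 1) * A ≤ 2 * (M / 20 * ε)) (hB : (M - 2) * B ≤ 2 * (M / 20 * ε)) :
    A + B ≤ ε / 2 := by
  have hA' : A ≤ 3 / 20 * ε := by nlinarith
  have hB' : B ≤ 3 / 10 * ε := by nlinarith
  linarith

theorem stmt_4_general (M : ℕ) (hM : 3 ≤ M) (a : ℝ) (ha0 : 0 ≤ a) (ha1 : a ≤ 1)
    (ε : ℝ) (h : ℝ → ℝ)
    (hconv : ConvexOn ℝ (Set.Icc (1 : ℝ) ((M : ℝ) + a)) h)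
    (hgap : ∀ x ∈ Finset.Icc 1 M, ∀ y ∈ Finset.Icc 1 M,
      h (x : ℝ) - h (y : ℝ) ≤ (M : ℝ) / 20 * ε) :
    (∀ i : ℕ, 2 ≤ i → i ≤ M - 1 → 2 * h (i : ℝ) ≤ h ((i : ℝ) + 1) + h ((i : ℝ) - 1)) ∧
    (∃ y ∈ Finset.Icc 1 ((M + 1) / 2),
      h ((2 * y - 1 : ℕ) : ℝ) - sInf (h '' Set.Icc (1 : ℝ) ((M : ℝ) + a)) ≤ ε / 2) := by
  have hM3 : (3 : ℝ) ≤ M := by exact_mod_cast hM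
  have hMa : (M : ℝ) ≤ M + a := le_add_of_nonneg_right ha0
  have h1 : 1 ∈ Finset.Icc 1 M := Finset.mem_Icc.mpr ⟨le_rfl, by omega⟩
  refine ⟨fun i hi2 hiM => ?_, ?_⟩
  · have hi2' : (2 : ℝ) ≤ i := by exact_mod_cast hi2
    have hiM' : (i : ℝ) + 1 ≤ M := by exact_mod_cast (show i + 1 ≤ M by omega)
    have := hconv.mul_sub_le_mul_sub (x := i - 1) (y := i) (z := i + 1)
      ⟨by linarith, by linarith⟩ ⟨by linarith, by linarith⟩ (by linarith) (by linarith)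
    linarith
  have hε : 0 ≤ ε := by
    have := hgap 1 h1 1 h1
    rw [sub_self] at this
    exact nonneg_of_mul_nonneg_right this (by positivity)
  obtain ⟨i, hi, hmin⟩ := (Finset.Icc 1 M).exists_min_image (fun n => h n) ⟨1, h1⟩
  obtain ⟨p, hp, hodd, hpi⟩ := exists_odd_grid_point_mul_sub_le hconv hMa hgap hi
  rw [Finset.mem_Icc] at hp
  refine ⟨(p + 1) / 2, Finset.mem_Icc.mpr ⟨by omega, by omega⟩, ?_⟩
  rw [show 2 * ((p + 1) / 2) - 1 = p by omega, sub_le_comm]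
  refine le_csInf ⟨h 1, 1, ⟨le_rfl, by linarith⟩, rfl⟩ ?_
  rintro _ ⟨x, hx, rfl⟩
  obtain ⟨n, hn, hnx⟩ := exists_grid_point_mul_sub_le hconv hMa (by linarith) hM hgap hx
  have hix : ((M : ℝ) - 2) * (h i - h x) ≤ 2 * (M / 20 * ε) :=
    hnx.trans' (mul_le_mul_of_nonneg_left (by linarith [hmin n hn]) (by linarith))
  linarith [add_le_half_of_mul_le hM3 hε hpi hix]

/-- If h is convex on [1, M+a] with integer M ≥ 3 and a ∈ [0,1], then
the restriction of h to {1,...,M} is discretely convex; moreover, if the spread of h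
over {1,...,M} is at most (M/20)·ε, then the minimum of h over the odd points
2y-1, y ∈ {1,...,⌈M/2⌉}, exceeds the infimum of h over [1, M+a] by at most ε/2. -/
theorem stmt_4 (M : ℕ) (hM : 3 ≤ M) (a : ℝ) (ha0 : 0 ≤ a) (ha1 : a ≤ 1)
    (ε : ℝ) (hε : 0 < ε) (h : ℝ → ℝ)
    (hconv : ConvexOn ℝ (Set.Icc (1 : ℝ) ((M : ℝ) + a)) h)
    (hgap : ∀ x ∈ Finset.Icc 1 M, ∀ y ∈ Finset.Icc 1 M,
      h (x : ℝ) - h (y : ℝ) ≤ (M : ℝ) / 20 * ε) :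
    (∀ i : ℕ, 2 ≤ i → i ≤ M - 1 → 2 * h (i : ℝ) ≤ h ((i : ℝ) + 1) + h ((i : ℝ) - 1)) ∧
    (∃ y ∈ Finset.Icc 1 ((M + 1) / 2),
      h ((2 * y - 1 : ℕ) : ℝ) - sInf (h '' Set.Icc (1 : ℝ) ((M : ℝ) + a)) ≤ ε / 2) :=
  stmt_4_general M hM a ha0 ha1 ε h hconv hgap
end

section
/- Let h be convex on [1, M+a] with M ≥ 3 an integer and a ∈ [0,1], and suppose max_{x∈{1,...,M}} h(x) - min_{x∈{1,...,M}} h(x) ≤ (M/20)·ε. Then min_{x∈[1,M]} h(x) - min_{x∈[1,M+a]} h(x) ≤ ε/10. -/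
/-!
By the three-slope inequality for the convex function `h` at `1 < M < x`, any point `x` of
`(M, M + a]` satisfies `(M - 1) (h M - h x) ≤ (x - M) (h 1 - h M) ≤ (M / 20) ε`, and
`M / 20 ≤ (M - 1) / 10` for `M ≥ 2`. So extending the interval past `M` lowers the minimum
by at most `ε / 10`.
-/

open Set

theorem ConvexOn.bddBelow_image_Icc {f : ℝ → ℝ} {a b : ℝ} (hf : ConvexOn ℝ (Icc a b) f) :
    BddBelow (f '' Icc a b) := by
  refine ⟨2 * f ((a + b) / 2) - max (f a) (f b), ?_⟩
  rintro _ ⟨x, hx, rfl⟩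
  have hx' : a + b - x ∈ Icc a b := ⟨by linarith [hx.2], by linarith [hx.1]⟩
  have hab : a ≤ b := hx.1.trans hx.2
  -- `(a + b) / 2` is the midpoint of `x` and its reflection `a + b - x`
  have hmid := hf.2 hx hx' (by norm_num : (0 : ℝ) ≤ 1 / 2) (by norm_num : (0 : ℝ) ≤ 1 / 2)
    (by norm_num)
  have hrefl := hf.le_on_segment (left_mem_Icc.2 hab) (right_mem_Icc.2 hab)
    (by rwa [segment_eq_Icc hab])
  simp only [smul_eq_mul] at hmid
  rw [show 1 / 2 * x + 1 / 2 * (a + b - x) = (a + b) / 2 by ring] at hmid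
  linarith

theorem ConvexOn.sub_le_of_lt_of_lt {f : ℝ → ℝ} {s : Set ℝ} (hf : ConvexOn ℝ s f) {p m x : ℝ}
    (hp : p ∈ s) (hx : x ∈ s) (hpm : p < m) (hmx : m < x) :
    (m - p) * (f m - f x) ≤ (x - m) * (f p - f m) := by
  have := hf.slope_mono_adjacent hp hx hpm hmx
  rw [div_le_div_iff₀ (by linarith) (by linarith)] at this
  linarith

theorem ConvexOn.le_add_of_mem_Icc {f : ℝ → ℝ} {p m c δ : ℝ} (hf : ConvexOn ℝ (Icc p c) f)
    (hpm : p < m) (hδ : 0 ≤ δ) (hslope : (c - m) * (f p - f m) ≤ (m - p) * δ)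
    {x : ℝ} (hx : x ∈ Icc m c) : f m ≤ f x + δ := by
  obtain rfl | hmx := hx.1.eq_or_lt
  · linarith
  have key := hf.sub_le_of_lt_of_lt (left_mem_Icc.2 (hpm.le.trans (hx.1.trans hx.2)))
    ⟨hpm.le.trans hx.1, hx.2⟩ hpm hmx
  have hbound : (x - m) * (f p - f m) ≤ (m - p) * δ := by
    rcases le_total (f p - f m) 0 with hneg | hpos
    · nlinarith
    · nlinarith [mul_le_mul_of_nonneg_right (sub_le_sub_right hx.2 m) hpos]
  nlinarith

theorem ConvexOn.sInf_image_Icc_sub_le {f : ℝ → ℝ} {p m c δ : ℝ} (hf : ConvexOn ℝ (Icc p c) f)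
    (hpm : p < m) (hmc : m ≤ c) (hδ : 0 ≤ δ) (hslope : (c - m) * (f p - f m) ≤ (m - p) * δ) :
    sInf (f '' Icc p m) - sInf (f '' Icc p c) ≤ δ := by
  have hsub : Icc p m ⊆ Icc p c := Icc_subset_Icc_right hmc
  have hbdd : BddBelow (f '' Icc p m) := hf.bddBelow_image_Icc.mono (image_mono hsub)
  have hle : ∀ y ∈ Icc p m, sInf (f '' Icc p m) ≤ f y := fun y hy => csInf_le hbdd ⟨y, hy, rfl⟩
  suffices ∀ x ∈ Icc p c, sInf (f '' Icc p m) - δ ≤ f x by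
    have := le_csInf ((nonempty_Icc.2 (hpm.le.trans hmc)).image f) (forall_mem_image.2 this)
    linarith
  intro x hx
  rcases le_total x m with hxm | hmx
  · linarith [hle x ⟨hx.1, hxm⟩]
  · linarith [hle m (right_mem_Icc.2 hpm.le), hf.le_add_of_mem_Icc hpm hδ hslope ⟨hmx, hx.2⟩]

theorem stmt_5_general (M : ℕ) (hM : 3 ≤ M) (a : ℝ) (ha0 : 0 ≤ a) (ha1 : a ≤ 1)
    (ε : ℝ) (h : ℝ → ℝ)
    (hconv : ConvexOn ℝ (Set.Icc (1 : ℝ) ((M : ℝ) + a)) h)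
    (hgap : ∀ x ∈ Finset.Icc 1 M, ∀ y ∈ Finset.Icc 1 M,
      h (x : ℝ) - h (y : ℝ) ≤ (M : ℝ) / 20 * ε) :
    sInf (h '' Set.Icc (1 : ℝ) (M : ℝ)) - sInf (h '' Set.Icc (1 : ℝ) ((M : ℝ) + a)) ≤ ε / 10 := by
  have hM3 : (3 : ℝ) ≤ M := by exact_mod_cast hM
  have h1 : 1 ∈ Finset.Icc 1 M := Finset.mem_Icc.2 ⟨le_rfl, by omega⟩
  have hMmem : M ∈ Finset.Icc 1 M := Finset.mem_Icc.2 ⟨by omega, le_rfl⟩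
  have hε : 0 ≤ ε := by
    have := hgap 1 h1 1 h1
    rw [sub_self] at this
    nlinarith
  have hspread : h 1 - h M ≤ M / 20 * ε := by simpa using hgap 1 h1 M hMmem
  refine hconv.sInf_image_Icc_sub_le (by linarith) (by linarith) (by positivity) ?_
  rw [add_sub_cancel_left]
  rcases le_total (h 1 - h M) 0 with hneg | hpos
  · nlinarith
  · nlinarith [mul_le_mul_of_nonneg_right ha1 hpos]

/-- If h is convex on [1, M+a] with integer M ≥ 3, a ∈ [0,1], and the
spread of h over the integers {1,...,M} is at most (M/20)·ε, then
min_{[1,M]} h - min_{[1,M+a]} h ≤ ε/10. -/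
theorem stmt_5 (M : ℕ) (hM : 3 ≤ M) (a : ℝ) (ha0 : 0 ≤ a) (ha1 : a ≤ 1)
    (ε : ℝ) (hε : 0 < ε) (h : ℝ → ℝ)
    (hconv : ConvexOn ℝ (Set.Icc (1 : ℝ) ((M : ℝ) + a)) h)
    (hgap : ∀ x ∈ Finset.Icc 1 M, ∀ y ∈ Finset.Icc 1 M,
      h (x : ℝ) - h (y : ℝ) ≤ (M : ℝ) / 20 * ε) :
    sInf (h '' Set.Icc (1 : ℝ) (M : ℝ)) - sInf (h '' Set.Icc (1 : ℝ) ((M : ℝ) + a)) ≤ ε / 10 :=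
  stmt_5_general M hM a ha0 ha1 ε h hconv hgap
end

section
/- Let h be convex on the real interval [1, M] with M ≥ 3 an integer, and suppose max_{x∈{1,...,M}} h(x) - min_{x∈{1,...,M}} h(x) ≤ (M/20)·ε. Then min_{x∈{1,...,M}} h(x) - min_{x∈[1,M]} h(x) ≤ ε/5. -/
/-!
Let `k` minimise `h` over the integers `1, …, M`. Every `x ∈ [1, M]` lies within distance `1` of an
integer `z` that sits between `x` and one of the endpoints `y ∈ {1, M}` with `|y - z| ≥ M / 4`.
Convexity on the segment `[x, y]` compares the slope from `x` to `z` with the slope from `z` to `y`,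
and the latter is at most `(M / 20) ε / (M / 4) = ε / 5` because `h y - h z ≤ h y - h k ≤ (M / 20) ε`.
Hence `h k ≤ h z ≤ h x + ε / 5`.
-/

open Set

namespace ConvexOn

variable {s : Set ℝ} {f : ℝ → ℝ} {x y z : ℝ}

theorem abs_sub_mul_sub_le (hf : ConvexOn ℝ s f) (hx : x ∈ s) (hy : y ∈ s)
    (hz : z ∈ segment ℝ x y) : |y - z| * (f z - f x) ≤ |z - x| * (f y - f z) := by
  obtain ⟨a, b, ha, hb, hab, rfl⟩ := hz
  have hfz := hf.2 hx hy ha hb hab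
  simp only [smul_eq_mul] at hfz ⊢
  have hyz : |y - (a * x + b * y)| = a * |y - x| := by
    rw [show y - (a * x + b * y) = a * (y - x) by linear_combination (-y) * hab,
      abs_mul, abs_of_nonneg ha]
  have hzx : |a * x + b * y - x| = b * |y - x| := by
    rw [show a * x + b * y - x = b * (y - x) by linear_combination x * hab,
      abs_mul, abs_of_nonneg hb]
  rw [hyz, hzx, mul_right_comm, mul_right_comm b]
  refine mul_le_mul_of_nonneg_right ?_ (abs_nonneg _)
  linear_combination hfz + f (a * x + b * y) * hab

theorem sub_le_div_of_abs_sub_le_one (hf : ConvexOn ℝ s f) (hx : x ∈ s) (hy : y ∈ s)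
    (hz : z ∈ segment ℝ x y) (hzx : |z - x| ≤ 1) {L G : ℝ} (hL : 0 < L) (hyz : L ≤ |y - z|)
    (hG : 0 ≤ G) (hfyz : f y - f z ≤ G) : f z - f x ≤ G / L := by
  have hslope : |y - z| * (f z - f x) ≤ G :=
    calc |y - z| * (f z - f x) ≤ |z - x| * (f y - f z) := hf.abs_sub_mul_sub_le hx hy hz
      _ ≤ |z - x| * G := mul_le_mul_of_nonneg_left hfyz (abs_nonneg _)
      _ ≤ G := mul_le_of_le_one_left hG hzx
  rcases le_or_gt (f z - f x) 0 with hneg | hpos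
  · exact hneg.trans (div_nonneg hG hL.le)
  · rw [le_div_iff₀ hL, mul_comm]
    exact (mul_le_mul_of_nonneg_right hyz hpos.le).trans hslope

end ConvexOn

/-- The integer `z` is `⌈x⌉₊` with `y = M` when `x` lies in the left half of `[1, M]`, and `⌊x⌋₊`
with `y = 1` otherwise. -/
theorem exists_near_far_nat_of_mem_Icc {M : ℕ} (hM : 3 ≤ M) {x : ℝ} (hx : x ∈ Icc 1 (M : ℝ)) :
    ∃ z ∈ Finset.Icc 1 M, ∃ y ∈ Finset.Icc 1 M,
      (z : ℝ) ∈ segment ℝ x (y : ℝ) ∧ |(z : ℝ) - x| ≤ 1 ∧ (M : ℝ) / 4 ≤ |(y : ℝ) - z| := by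
  obtain ⟨hx1, hxM⟩ := hx
  rcases le_or_gt (2 * x) (M + 1) with hleft | hright
  · have hzx : x ≤ ⌈x⌉₊ := Nat.le_ceil x
    have hzx' : (⌈x⌉₊ : ℝ) < x + 1 := Nat.ceil_lt_add_one (by linarith)
    have hz2 : 2 * ⌈x⌉₊ < M + 3 := by exact_mod_cast (by linarith : (2 * ⌈x⌉₊ : ℝ) < M + 3)
    have hz1 : 1 ≤ ⌈x⌉₊ := by exact_mod_cast hx1.trans hzx
    have hz4 : 4 * ⌈x⌉₊ ≤ 3 * M := by omega
    have hz4' : (4 * ⌈x⌉₊ : ℝ) ≤ 3 * M := by exact_mod_cast hz4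
    refine ⟨⌈x⌉₊, Finset.mem_Icc.2 ⟨hz1, by omega⟩, M, Finset.mem_Icc.2 ⟨by omega, le_rfl⟩,
      ?_, ?_, ?_⟩
    · rw [segment_eq_Icc hxM]
      exact ⟨hzx, by linarith⟩
    · rw [abs_of_nonneg (by linarith)]
      linarith
    · rw [abs_of_nonneg (by linarith)]
      linarith
  · have hzx : (⌊x⌋₊ : ℝ) ≤ x := Nat.floor_le (by linarith)
    have hzx' : x < ⌊x⌋₊ + 1 := Nat.lt_floor_add_one x
    have hz2 : M < 2 * ⌊x⌋₊ + 1 := by exact_mod_cast (by linarith : (M : ℝ) < 2 * ⌊x⌋₊ + 1)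
    have hzM : ⌊x⌋₊ ≤ M := by exact_mod_cast hzx.trans hxM
    have hz4 : M + 4 ≤ 4 * ⌊x⌋₊ := by omega
    have hz4' : (M + 4 : ℝ) ≤ 4 * ⌊x⌋₊ := by exact_mod_cast hz4
    refine ⟨⌊x⌋₊, Finset.mem_Icc.2 ⟨by omega, hzM⟩, 1, Finset.mem_Icc.2 ⟨le_rfl, by omega⟩,
      ?_, ?_, ?_⟩
    · rw [segment_symm, segment_eq_Icc (by simpa using hx1)]
      exact ⟨by push_cast; linarith, hzx⟩
    · rw [abs_of_nonpos (by linarith)]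
      linarith
    · rw [abs_of_nonpos (by push_cast; linarith)]
      push_cast
      linarith

/-- If h is convex on [1, M] with integer M ≥ 3 and the spread of h over
the integers {1,...,M} is at most (M/20)·ε, then the discrete minimum over {1,...,M}
exceeds the continuous minimum over [1,M] by at most ε/5. -/
theorem stmt_6 (M : ℕ) (hM : 3 ≤ M) (ε : ℝ) (hε : 0 < ε) (h : ℝ → ℝ)
    (hconv : ConvexOn ℝ (Set.Icc (1 : ℝ) (M : ℝ)) h)
    (hgap : ∀ x ∈ Finset.Icc 1 M, ∀ y ∈ Finset.Icc 1 M,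
      h (x : ℝ) - h (y : ℝ) ≤ (M : ℝ) / 20 * ε) :
    ∃ k ∈ Finset.Icc 1 M,
      h (k : ℝ) - sInf (h '' Set.Icc (1 : ℝ) (M : ℝ)) ≤ ε / 5 := by
  obtain ⟨k, hk, hkmin⟩ := (Finset.Icc 1 M).exists_min_image (fun n : ℕ ↦ h n)
    ⟨1, Finset.mem_Icc.2 ⟨le_rfl, by omega⟩⟩
  have hMpos : (0 : ℝ) < M := by positivity
  have hbound : ∀ x ∈ Icc (1 : ℝ) M, h k - ε / 5 ≤ h x := by
    intro x hx
    obtain ⟨z, hz, y, hy, hzxy, hzx, hyz⟩ := exists_near_far_nat_of_mem_Icc hM hx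
    have hyIcc : (y : ℝ) ∈ Icc (1 : ℝ) M :=
      ⟨by exact_mod_cast (Finset.mem_Icc.1 hy).1, by exact_mod_cast (Finset.mem_Icc.1 hy).2⟩
    have hdrop := hconv.sub_le_div_of_abs_sub_le_one hx hyIcc hzxy hzx (by positivity) hyz
      (by positivity) ((sub_le_sub_left (hkmin z hz) _).trans (hgap y hy k hk))
    have hratio : (M : ℝ) / 20 * ε / (M / 4) = ε / 5 := by field_simp; ring
    linarith [hkmin z hz]
  refine ⟨k, hk, ?_⟩
  have := le_csInf (⟨h 1, 1, ⟨le_rfl, by exact_mod_cast (by omega : 1 ≤ M)⟩, rfl⟩ :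
    (h '' Icc (1 : ℝ) M).Nonempty) (by rintro _ ⟨x, hx, rfl⟩; exact hbound x hx)
  linarith
end

section
/- Let h̃ : {1,...,M} → ℝ be discretely convex with M ≥ 3, and suppose max h̃ - min h̃ ≤ (M/20)·ε over {1,...,M}. Let M' = ⌈M/2⌉. Then min_{y∈{1,...,M'}} h̃(2y-1) - min_{x∈{1,...,M}} h̃(x) ≤ ε/5. -/
/-- If h̃ is discretely convex on {1,...,M} with M ≥ 3 and its spread
over {1,...,M} is at most (M/20)·ε, then restricting to the odd points 2y-1,
y ∈ {1,...,⌈M/2⌉}, loses at most ε/5 in the minimum. -/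
theorem stmt_7 (M : ℕ) (hM : 3 ≤ M) (ε : ℝ) (hε : 0 < ε) (h : ℕ → ℝ)
    (hconv : ∀ i, 2 ≤ i → i ≤ M - 1 → 2 * h i ≤ h (i + 1) + h (i - 1))
    (hgap : ∀ x ∈ Finset.Icc 1 M, ∀ y ∈ Finset.Icc 1 M,
      h x - h y ≤ (M : ℝ) / 20 * ε) :
    ∃ y ∈ Finset.Icc 1 ((M + 1) / 2), ∀ x ∈ Finset.Icc 1 M,
      h (2 * y - 1) ≤ h x + ε / 5 := by
  -- differences are monotone
  have dmono : ∀ i j, 1 ≤ i → i ≤ j → j ≤ M - 1 →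
      h (i+1) - h i ≤ h (j+1) - h j := by
    intro i j hi hij hj
    induction j, hij using Nat.le_induction with
    | base => exact le_refl _
    | succ n hn ih =>
      have hc := hconv (n+1) (by omega) (by omega)
      simp only [Nat.add_sub_cancel] at hc
      have := ih (by omega)
      have e : n + 1 + 1 = n + 2 := rfl
      linarith
  have hne : (Finset.Icc 1 M).Nonempty := ⟨1, by simp; omega⟩
  obtain ⟨x, hxmem, hxmin⟩ := Finset.exists_min_image (Finset.Icc 1 M) h hne
  rw [Finset.mem_Icc] at hxmem
  obtain ⟨hx1, hxM⟩ := hxmem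
  by_cases hodd : x % 2 = 1
  · refine ⟨(x+1)/2, Finset.mem_Icc.mpr ⟨by omega, by omega⟩, ?_⟩
    intro x' hx'
    have e : 2 * ((x+1)/2) - 1 = x := by omega
    rw [e]
    have := hxmin x' hx'
    linarith
  · -- x even, 2 ≤ x
    have hx2 : 2 ≤ x := by omega
    by_cases hcase : M - 1 ≤ 2 * (x - 1)
    · -- go left to x - 1
      have left : ∀ k, 1 ≤ k → k ≤ x - 1 →
          (k:ℝ) * (h (x-1) - h x) ≤ h (x-k) - h x := by
        intro k hk1 hk2
        induction k, hk1 using Nat.le_induction with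
        | base => norm_num
        | succ n hn ih =>
          have ihh := ih (by omega)
          have e1 : x - n - 1 + 1 = x - n := by omega
          have e2 : x - 1 + 1 = x := by omega
          have hd := dmono (x - n - 1) (x - 1) (by omega) (by omega) (by omega)
          rw [e1, e2] at hd
          have e3 : x - (n+1) = x - n - 1 := by omega
          rw [e3]
          push_cast
          linarith
      have hb := left (x-1) (by omega) le_rfl
      have e4 : x - (x - 1) = 1 := by omega
      rw [e4] at hb
      have hgap1 := hgap 1 (Finset.mem_Icc.mpr ⟨le_rfl, by omega⟩)
        x (Finset.mem_Icc.mpr ⟨by omega, hxM⟩)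
      have hL : h x ≤ h (x-1) := hxmin (x-1) (Finset.mem_Icc.mpr ⟨by omega, by omega⟩)
      have hc : (M:ℝ) ≤ 2 * ((x-1:ℕ):ℝ) + 1 := by
        have : M ≤ 2*(x-1)+1 := by omega
        exact_mod_cast this
      have hM3 : (3:ℝ) ≤ (M:ℝ) := by exact_mod_cast hM
      have hfin : h (x-1) - h x ≤ ε / 5 := by nlinarith
      refine ⟨x/2, Finset.mem_Icc.mpr ⟨by omega, by omega⟩, ?_⟩
      intro x' hx'
      have e : 2 * (x/2) - 1 = x - 1 := by omega
      rw [e]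
      have := hxmin x' hx'
      linarith
    · -- go right to x + 1
      have hxM' : x + 1 ≤ M := by omega
      have right : ∀ k, 1 ≤ k → k ≤ M - x →
          (k:ℝ) * (h (x+1) - h x) ≤ h (x+k) - h x := by
        intro k hk1 hk2
        induction k, hk1 using Nat.le_induction with
        | base => norm_num
        | succ n hn ih =>
          have ihh := ih (by omega)
          have hd := dmono x (x+n) (by omega) (by omega) (by omega)
          have e1 : x + (n+1) = x + n + 1 := by omega
          rw [e1]
          push_cast
          linarith
      have hb := right (M-x) (by omega) le_rfl
      have e4 : x + (M - x) = M := by omega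
      rw [e4] at hb
      have hgapM := hgap M (Finset.mem_Icc.mpr ⟨by omega, le_rfl⟩)
        x (Finset.mem_Icc.mpr ⟨by omega, hxM⟩)
      have hR : h x ≤ h (x+1) := hxmin (x+1) (Finset.mem_Icc.mpr ⟨by omega, hxM'⟩)
      have hc : (M:ℝ) ≤ 2 * ((M-x:ℕ):ℝ) := by
        have : M ≤ 2*(M-x) := by omega
        exact_mod_cast this
      have hM3 : (3:ℝ) ≤ (M:ℝ) := by exact_mod_cast hM
      have hfin : h (x+1) - h x ≤ ε / 5 := by nlinarith
      refine ⟨x/2 + 1, Finset.mem_Icc.mpr ⟨by omega, by omega⟩, ?_⟩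
      intro x' hx'
      have e : 2 * (x/2 + 1) - 1 = x + 1 := by omega
      rw [e]
      have := hxmin x' hx'
      linarith
end

section
/- Let f : [N]^d → ℝ be L♮-convex (discrete midpoint convex). Then f satisfies translation submodularity: for all x, y ∈ [N]^d and all nonnegative integers α such that (x - α·1)∨y and x∧(y + α·1) lie in [N]^d, f(x) + f(y) ≥ f((x - α·1)∨y) + f(x∧(y + α·1)), where ∨ and ∧ denote componentwise max and min and 1 is the all-ones vector. In particular (α = 0), f is submodular on [N]^d. -/
/-!
Extend `f` from the box to all of `ℤ^d` by clamping into the box and adding `4 S` times the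
ℓ¹-distance to the box, where `S` bounds `|f|` on the box: wherever clamping does not commute
with taking midpoints, the distance strictly drops at the midpoints, so the extension `F` is
discrete midpoint convex on all of `ℤ^d`. Its homogenization `g w = F (w₁ - w₀, …, w_d - w₀)`
on `ℤ^(d+1)` is again midpoint convex; midpoint convexity at `z + eᵢ`, `z + eⱼ` is the local
submodular inequality, which propagates to submodularity of `g`. Submodularity of `g` at
`(0, x)` and `(α, y + α)` is the translation submodularity of `F`.
-/

open Finset

namespace DiscreteConvex

variable {ι : Type*}

def box (N : ℤ) : Set (ι → ℤ) := {x | ∀ i, 1 ≤ x i ∧ x i ≤ N}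

/-- `(s + 1) / 2` and `s / 2` are the ceiling and the floor of `s / 2`. -/
def MidpointConvexOn (s : Set (ι → ℤ)) (f : (ι → ℤ) → ℝ) : Prop :=
  ∀ x ∈ s, ∀ y ∈ s,
    f (fun i => (x i + y i + 1) / 2) + f (fun i => (x i + y i) / 2) ≤ f x + f y

section Submodular

variable [DecidableEq ι]

def LocallySubmodular (h : (ι → ℤ) → ℝ) : Prop :=
  ∀ (z : ι → ℤ) (i j : ι), i ≠ j →
    h (z + Pi.single i 1 + Pi.single j 1) + h z ≤ h (z + Pi.single i 1) + h (z + Pi.single j 1)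

lemma MidpointConvexOn.locallySubmodular {g : (ι → ℤ) → ℝ}
    (hg : MidpointConvexOn Set.univ g) : LocallySubmodular g := by
  intro z i j hij
  convert hg (z + Pi.single i 1) trivial (z + Pi.single j 1) trivial using 3 <;>
  · funext k
    simp only [Pi.add_apply, Pi.single_apply]
    split_ifs <;> grind

variable [Fintype ι] {h : (ι → ℤ) → ℝ}

lemma LocallySubmodular.add_single_add_le (hh : LocallySubmodular h) {a b : ι → ℤ}
    (hab : a ≤ b) {i : ι} (hi : a i = b i) :
    h (b + Pi.single i 1) + h a ≤ h (a + Pi.single i 1) + h b := by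
  obtain ⟨n, hn⟩ : ∃ n : ℕ, ∑ k, (b k - a k) = n :=
    Int.eq_ofNat_of_zero_le (sum_nonneg fun k _ => sub_nonneg.2 (hab k))
  induction n generalizing b with
  | zero =>
    have hba : b = a := funext fun k => by
      have := (sum_eq_zero_iff_of_nonneg fun k _ => sub_nonneg.2 (hab k)).1 hn k (mem_univ k)
      omega
    rw [hba]
  | succ n ih =>
    obtain ⟨j, hj⟩ : ∃ j, a j < b j := by
      by_contra! hle
      have : ∑ k, (b k - a k) = 0 := sum_eq_zero fun k _ => by linarith [hle k, hab k]
      rw [this] at hn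
      omega
    have hij : i ≠ j := by rintro rfl; omega
    have hab' : a ≤ b - Pi.single j 1 := fun k => by
      have hk : a k ≤ b k := hab k
      simp only [Pi.sub_apply, Pi.single_apply]
      split_ifs with hkj <;> [subst hkj; skip] <;> omega
    have hstep := ih hab' (by simp [hi, hij]) (by
      simp only [Pi.sub_apply, sum_sub_distrib, sum_pi_single', mem_univ, if_true] at hn ⊢
      omega)
    have hloc := hh (b - Pi.single j 1) i j hij
    rw [sub_add_cancel, add_right_comm, sub_add_cancel] at hloc
    linarith

theorem LocallySubmodular.sup_add_inf_le (hh : LocallySubmodular h) (x y : ι → ℤ) :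
    h (x ⊔ y) + h (x ⊓ y) ≤ h x + h y := by
  obtain ⟨n, hn⟩ : ∃ n : ℕ, ∑ k, (x k - (x ⊓ y) k) = n :=
    Int.eq_ofNat_of_zero_le (sum_nonneg fun k _ => sub_nonneg.2 inf_le_left)
  induction n generalizing y with
  | zero =>
    have hxy : x ≤ y := fun k => by
      have := (sum_eq_zero_iff_of_nonneg fun k _ => sub_nonneg.2 inf_le_left).1 hn k (mem_univ k)
      exact (sub_eq_zero.1 this).le.trans inf_le_right
    rw [sup_eq_right.2 hxy, inf_eq_left.2 hxy, add_comm]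
  | succ n ih =>
    obtain ⟨i, hi⟩ : ∃ i, y i < x i := by
      by_contra! hle
      have : ∑ k, (x k - (x ⊓ y) k) = 0 := sum_eq_zero fun k _ => by
        rw [Pi.inf_apply, inf_eq_left.2 (hle k), sub_self]
      rw [this] at hn
      omega
    have hsup : x ⊔ (y + Pi.single i 1) = x ⊔ y := funext fun k => by
      simp only [Pi.sup_apply, Pi.add_apply, Pi.single_apply]
      split_ifs with hk <;> [subst hk; skip] <;> omega
    have hinf : x ⊓ (y + Pi.single i 1) = x ⊓ y + Pi.single i 1 := funext fun k => by
      simp only [Pi.inf_apply, Pi.add_apply, Pi.single_apply]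
      split_ifs with hk <;> [subst hk; skip] <;> omega
    have hstep := ih (y + Pi.single i 1) (by
      simp only [hinf, Pi.add_apply, sum_sub_distrib, sum_add_distrib, sum_pi_single', mem_univ,
        if_true] at hn ⊢
      omega)
    rw [hsup, hinf] at hstep
    have hdr := hh.add_single_add_le (i := i) inf_le_right (inf_eq_right.2 hi.le)
    linarith

end Submodular

section Extension

variable (N : ℤ)

def clampIcc (t : ℤ) : ℤ := max 1 (min t N)

def distIcc (t : ℤ) : ℤ := max (1 - t) 0 + max (t - N) 0

lemma distIcc_midpoint_le (a b : ℤ) :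
    distIcc N ((a + b + 1) / 2) + distIcc N ((a + b) / 2) ≤ distIcc N a + distIcc N b := by
  unfold distIcc; omega

lemma clampIcc_midpoint_or_distIcc_midpoint_lt {N : ℤ} (hN : 1 ≤ N) (a b : ℤ) :
    (clampIcc N ((a + b + 1) / 2) = (clampIcc N a + clampIcc N b + 1) / 2 ∧
      clampIcc N ((a + b) / 2) = (clampIcc N a + clampIcc N b) / 2) ∨
    distIcc N ((a + b + 1) / 2) + distIcc N ((a + b) / 2) < distIcc N a + distIcc N b := by
  unfold clampIcc distIcc; omega

lemma clampIcc_mem_box {N : ℤ} (hN : 1 ≤ N) (z : ι → ℤ) :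
    (fun k => clampIcc N (z k)) ∈ box N := fun k => by
  show 1 ≤ clampIcc N (z k) ∧ clampIcc N (z k) ≤ N
  unfold clampIcc; omega

variable [Fintype ι]

def distBox (z : ι → ℤ) : ℤ := ∑ k, distIcc N (z k)

noncomputable def boxExtension (f : (ι → ℤ) → ℝ) (C : ℝ) (z : ι → ℤ) : ℝ :=
  f (fun k => clampIcc N (z k)) + C * distBox N z

variable {N}

lemma boxExtension_of_mem (f : (ι → ℤ) → ℝ) (C : ℝ) {z : ι → ℤ} (hz : z ∈ box N) :
    boxExtension N f C z = f z := by
  have hclamp : (fun k => clampIcc N (z k)) = z := funext fun k => by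
    have := hz k; unfold clampIcc; omega
  have hdist : distBox N z = 0 := sum_eq_zero fun k _ => by
    have := hz k; unfold distIcc; omega
  simp [boxExtension, hclamp, hdist]

lemma distBox_midpoint_le (x y : ι → ℤ) :
    distBox N (fun k => (x k + y k + 1) / 2) + distBox N (fun k => (x k + y k) / 2)
      ≤ distBox N x + distBox N y := by
  simp only [distBox, ← sum_add_distrib]
  exact sum_le_sum fun k _ => distIcc_midpoint_le N (x k) (y k)

lemma distBox_midpoint_lt (hN : 1 ≤ N) (x y : ι → ℤ) (k : ι)
    (hk : ¬(clampIcc N ((x k + y k + 1) / 2) = (clampIcc N (x k) + clampIcc N (y k) + 1) / 2 ∧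
      clampIcc N ((x k + y k) / 2) = (clampIcc N (x k) + clampIcc N (y k)) / 2)) :
    distBox N (fun k => (x k + y k + 1) / 2) + distBox N (fun k => (x k + y k) / 2)
      < distBox N x + distBox N y := by
  simp only [distBox, ← sum_add_distrib]
  refine sum_lt_sum (fun k _ => distIcc_midpoint_le N (x k) (y k)) ⟨k, mem_univ k, ?_⟩
  exact (clampIcc_midpoint_or_distIcc_midpoint_lt hN (x k) (y k)).resolve_left hk

lemma midpointConvexOn_boxExtension {f : (ι → ℤ) → ℝ} {S : ℝ} (hN : 1 ≤ N)
    (hf : MidpointConvexOn (box N) f) (hS : ∀ z ∈ box N, |f z| ≤ S) :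
    MidpointConvexOn Set.univ (boxExtension N f (4 * S)) := by
  intro x _ y _
  set c : ι → ℤ := fun k => (x k + y k + 1) / 2
  set c' : ι → ℤ := fun k => (x k + y k) / 2
  have hS0 : 0 ≤ S := (abs_nonneg _).trans (hS _ (clampIcc_mem_box hN x))
  unfold boxExtension
  by_cases hcomm : ∀ k,
      clampIcc N (c k) = (clampIcc N (x k) + clampIcc N (y k) + 1) / 2 ∧
      clampIcc N (c' k) = (clampIcc N (x k) + clampIcc N (y k)) / 2
  · have hmid := hf _ (clampIcc_mem_box hN x) _ (clampIcc_mem_box hN y)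
    rw [← funext fun k => (hcomm k).1, ← funext fun k => (hcomm k).2] at hmid
    have hdist : (4 * S) * ((distBox N c + distBox N c' : ℤ) : ℝ)
        ≤ (4 * S) * ((distBox N x + distBox N y : ℤ) : ℝ) :=
      mul_le_mul_of_nonneg_left (Int.cast_le.2 (distBox_midpoint_le x y)) (by linarith)
    push_cast at hdist
    linarith
  -- otherwise the penalty gains at least `4 S`, which bounds the change of the `f`-terms
  · obtain ⟨k, hk⟩ := not_forall.1 hcomm
    have hdist : (4 * S) * ((distBox N c + distBox N c' + 1 : ℤ) : ℝ)
        ≤ (4 * S) * ((distBox N x + distBox N y : ℤ) : ℝ) :=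
      mul_le_mul_of_nonneg_left (Int.cast_le.2 (distBox_midpoint_lt hN x y k hk)) (by linarith)
    push_cast at hdist
    have hx := abs_le.1 (hS _ (clampIcc_mem_box hN x))
    have hy := abs_le.1 (hS _ (clampIcc_mem_box hN y))
    have hc := abs_le.1 (hS _ (clampIcc_mem_box hN c))
    have hc' := abs_le.1 (hS _ (clampIcc_mem_box hN c'))
    linarith

theorem MidpointConvexOn.exists_extension [DecidableEq ι] {f : (ι → ℤ) → ℝ} (hN : 1 ≤ N)
    (hf : MidpointConvexOn (box N) f) :
    ∃ F : (ι → ℤ) → ℝ, MidpointConvexOn Set.univ F ∧ ∀ z ∈ box N, F z = f z := by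
  set boxFinset := Fintype.piFinset fun _ : ι => Icc 1 N
  have hmem : ∀ z, z ∈ box N → z ∈ boxFinset := fun z hz =>
    Fintype.mem_piFinset.2 fun k => mem_Icc.2 (hz k)
  have hS : ∀ z ∈ box N, |f z| ≤ ∑ w ∈ boxFinset, |f w| := fun z hz =>
    single_le_sum (fun w _ => abs_nonneg (f w)) (hmem z hz)
  exact ⟨_, midpointConvexOn_boxExtension hN hf hS, fun z hz => boxExtension_of_mem f _ hz⟩

end Extension

section Homogenization

variable {d : ℕ}

def dehomogenize (w : Fin (d + 1) → ℤ) : Fin d → ℤ := fun k => w k.succ - w 0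

lemma MidpointConvexOn.comp_dehomogenize {F : (Fin d → ℤ) → ℝ}
    (hF : MidpointConvexOn Set.univ F) : MidpointConvexOn Set.univ (F ∘ dehomogenize) := by
  intro w _ u _
  simp only [Function.comp_apply]
  rcases Int.even_or_odd (w 0 + u 0) with ⟨m, hm⟩ | ⟨m, hm⟩
  · convert hF (dehomogenize w) trivial (dehomogenize u) trivial using 3 <;>
    · funext k
      simp only [dehomogenize]
      omega
  -- an odd `w 0 + u 0` swaps the ceiling and the floor
  · rw [add_comm (F _)]
    convert hF (dehomogenize w) trivial (dehomogenize u) trivial using 3 <;>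
    · funext k
      simp only [dehomogenize]
      omega

theorem MidpointConvexOn.translation_submodular {F : (Fin d → ℤ) → ℝ}
    (hF : MidpointConvexOn Set.univ F) (x y : Fin d → ℤ) {α : ℤ} (hα : 0 ≤ α) :
    F (fun i => max (x i - α) (y i)) + F (fun i => min (x i) (y i + α)) ≤ F x + F y := by
  have key := hF.comp_dehomogenize.locallySubmodular.sup_add_inf_le
    (Fin.cons 0 x) (Fin.cons α fun i => y i + α)
  simp only [Function.comp_apply] at key
  convert key using 3 <;>
  · funext i
    simp only [dehomogenize, Pi.sup_apply, Pi.inf_apply, Fin.cons_succ, Fin.cons_zero]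
    omega

end Homogenization

end DiscreteConvex

/-- An L♮-convex (discrete midpoint convex) function f on the integer box
[N]^d satisfies translation submodularity: f(x) + f(y) ≥ f((x-α1)∨y) + f(x∧(y+α1))
whenever the two combinations stay in the box. In particular (α = 0) f is submodular.
Here `(s+1)/2` and `s/2` are the componentwise ceiling and floor of s/2 on ℤ. -/
theorem stmt_16 (d : ℕ) (N : ℤ) (hN : 2 ≤ N) (f : (Fin d → ℤ) → ℝ)
    (hL : ∀ x y : Fin d → ℤ, (∀ i, 1 ≤ x i ∧ x i ≤ N) → (∀ i, 1 ≤ y i ∧ y i ≤ N) →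
      f (fun i => (x i + y i + 1) / 2) + f (fun i => (x i + y i) / 2) ≤ f x + f y) :
    ∀ (x y : Fin d → ℤ) (α : ℤ), 0 ≤ α →
      (∀ i, 1 ≤ x i ∧ x i ≤ N) → (∀ i, 1 ≤ y i ∧ y i ≤ N) →
      (∀ i, 1 ≤ max (x i - α) (y i) ∧ max (x i - α) (y i) ≤ N) →
      (∀ i, 1 ≤ min (x i) (y i + α) ∧ min (x i) (y i + α) ≤ N) →
      f (fun i => max (x i - α) (y i)) + f (fun i => min (x i) (y i + α)) ≤ f x + f y := by
  intro x y α hα hx hy hu hv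
  obtain ⟨F, hF, hFf⟩ := DiscreteConvex.MidpointConvexOn.exists_extension (by omega : 1 ≤ N)
    fun x hx y hy => hL x y hx hy
  have key := hF.translation_submodular x y hα
  rwa [hFf x hx, hFf y hy, hFf _ hu, hFf _ hv] at key
end

section
/- Let f : {0,1}^d → ℝ be submodular, and define its Lovász extension f̃ : [0,1]^d → ℝ by f̃(x) = f(S^{x,0}) + ∑_{i=1}^d [f(S^{x,i}) - f(S^{x,i-1})]·x_{α(i)}, where α is a permutation of {1,...,d} with x_{α(1)} ≥ ... ≥ x_{α(d)} and S^{x,i} = ∑_{j=1}^i e_{α(j)}. Then f̃ agrees with f on {0,1}^d and min_{x∈[0,1]^d} f̃(x) = min_{x∈{0,1}^d} f(x). -/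
/-- The 0/1 indicator vector of the first `k` elements in the order given by the
permutation `α`, i.e. the point S^{x,k} = e_{α(1)} + ... + e_{α(k)}. -/
noncomputable def lovaszLevel (d : ℕ) (α : Equiv.Perm (Fin d)) (k : ℕ) : Fin d → ℝ :=
  fun j => if ((α.symm j : ℕ) < k) then 1 else 0

lemma lovaszLevel_vertex (d : ℕ) (α : Equiv.Perm (Fin d)) (k : ℕ) :
    ∀ i, lovaszLevel d α k i = 0 ∨ lovaszLevel d α k i = 1 := by
  intro i
  unfold lovaszLevel
  split <;> simp

/-- For a permutation sorting x decreasingly, if x is antitone along α then the extended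
sequence is antitone etc.; main inequality lemma: Abel-type lower bound. -/
lemma lovasz_lower (m : ℝ) (g Y : ℕ → ℝ) (hg : ∀ n, m ≤ g n)
    (hY1 : ∀ n, Y n ≤ 1) (hY0 : ∀ n, 0 ≤ Y n)
    (hanti : ∀ p q : ℕ, p ≤ q → Y q ≤ Y p) (d : ℕ) :
    m ≤ g 0 + ∑ i ∈ Finset.range d, (g (i + 1) - g i) * Y i := by
  have key : ∀ n : ℕ, m + (g n - m) * (if n = 0 then 1 else Y (n - 1)) ≤
      g 0 + ∑ i ∈ Finset.range n, (g (i + 1) - g i) * Y i := by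
    intro n
    induction n with
    | zero => simp
    | succ n ih =>
      rw [Finset.sum_range_succ, ← add_assoc]
      have hW : Y n ≤ (if n = 0 then 1 else Y (n - 1)) := by
        split
        · exact hY1 n
        · exact hanti _ _ (Nat.sub_le n 1)
      have hgn := hg n
      have h2 : (g n - m) * Y n ≤ (g n - m) * (if n = 0 then 1 else Y (n - 1)) := by
        apply mul_le_mul_of_nonneg_left hW (by linarith)
      simp only [Nat.succ_ne_zero, if_false, Nat.add_sub_cancel]
      nlinarith [ih]
  have h := key d
  have hW0 : (0:ℝ) ≤ (if d = 0 then 1 else Y (d - 1)) := by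
    split
    · norm_num
    · exact hY0 _
  have hgd := hg d
  nlinarith

/-- For a submodular f on {0,1}^d, the Lovász extension f̃, defined by
f̃(x) = f(S^{x,0}) + ∑ᵢ (f(S^{x,i}) - f(S^{x,i-1}))·x_{α(i)} for any permutation α
sorting the coordinates of x in decreasing order, agrees with f on {0,1}^d and has
min over [0,1]^d equal to min of f over {0,1}^d. -/
theorem stmt_17 (d : ℕ) (f ft : (Fin d → ℝ) → ℝ)
    (hsub : ∀ x y : Fin d → ℝ, (∀ i, x i = 0 ∨ x i = 1) → (∀ i, y i = 0 ∨ y i = 1) →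
      f (fun i => max (x i) (y i)) + f (fun i => min (x i) (y i)) ≤ f x + f y)
    (hft : ∀ x : Fin d → ℝ, x ∈ Set.Icc (0 : Fin d → ℝ) 1 → ∀ α : Equiv.Perm (Fin d),
      (∀ i j : Fin d, i ≤ j → x (α j) ≤ x (α i)) →
      ft x = f (lovaszLevel d α 0) +
        ∑ i : Fin d, (f (lovaszLevel d α ((i : ℕ) + 1)) - f (lovaszLevel d α (i : ℕ))) * x (α i)) :
    (∀ x : Fin d → ℝ, (∀ i, x i = 0 ∨ x i = 1) → ft x = f x) ∧
    sInf (ft '' Set.Icc (0 : Fin d → ℝ) 1) =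
      sInf (f '' {v : Fin d → ℝ | ∀ i, v i = 0 ∨ v i = 1}) := by
  set V : Set (Fin d → ℝ) := {v : Fin d → ℝ | ∀ i, v i = 0 ∨ v i = 1} with hVdef
  have hVfin : V.Finite := by
    have hsub' : V ⊆ Set.pi Set.univ (fun _ : Fin d => ({0, 1} : Set ℝ)) := by
      intro v hv i _
      rcases hv i with h | h <;> simp [h]
    exact (Set.Finite.pi (fun _ => (Set.finite_singleton (1:ℝ)).insert 0)).subset hsub'
  have hVne : V.Nonempty := ⟨fun _ => 0, fun i => Or.inl rfl⟩
  have hVIcc : ∀ v ∈ V, v ∈ Set.Icc (0 : Fin d → ℝ) 1 := by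
    intro v hv
    constructor <;> intro i <;> rcases hv i with h | h <;> simp [h]
  set m : ℝ := sInf (f '' V) with hmdef
  have hbddV : BddBelow (f '' V) := (hVfin.image f).bddBelow
  have hmle : ∀ v ∈ V, m ≤ f v := fun v hv => csInf_le hbddV ⟨v, hv, rfl⟩
  -- Common setup: for x in the cube, get a sorting permutation and the sum over range d.
  have hsetup : ∀ x : Fin d → ℝ, x ∈ Set.Icc (0 : Fin d → ℝ) 1 →
      ∃ α : Equiv.Perm (Fin d), ∃ Y : ℕ → ℝ,
        (∀ i : Fin d, Y (i : ℕ) = x (α i)) ∧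
        (∀ n, n ≥ d → Y n = 0) ∧
        (∀ p q : ℕ, p ≤ q → Y q ≤ Y p) ∧ (∀ n, Y n ≤ 1) ∧ (∀ n, 0 ≤ Y n) ∧
        ft x = f (lovaszLevel d α 0) + ∑ i ∈ Finset.range d,
          (f (lovaszLevel d α (i + 1)) - f (lovaszLevel d α i)) * Y i := by
    intro x hx
    obtain ⟨hx0, hx1⟩ := hx
    set α : Equiv.Perm (Fin d) := Fin.revPerm.trans (Tuple.sort x) with hα
    have hmono := Tuple.monotone_sort x
    have hsort : ∀ i j : Fin d, i ≤ j → x (α j) ≤ x (α i) := by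
      intro i j hij
      have : j.rev ≤ i.rev := Fin.rev_le_rev.mpr hij
      exact hmono this
    refine ⟨α, fun n => if h : n < d then x (α ⟨n, h⟩) else 0, ?_, ?_, ?_, ?_, ?_, ?_⟩
    · intro i; simp [i.isLt]
    · intro n hn; simp [Nat.not_lt_of_ge hn]
    · intro p q hpq
      by_cases hq : q < d
      · have hp : p < d := lt_of_le_of_lt hpq hq
        simp only [dif_pos hq, dif_pos hp]
        exact hsort ⟨p, hp⟩ ⟨q, hq⟩ hpq
      · simp only [dif_neg hq]
        by_cases hp : p < d
        · simp only [dif_pos hp]; exact hx0 _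
        · simp [dif_neg hp]
    · intro n
      by_cases hn : n < d
      · simp only [dif_pos hn]; exact hx1 _
      · simp [dif_neg hn]
    · intro n
      by_cases hn : n < d
      · simp only [dif_pos hn]; exact hx0 _
      · simp [dif_neg hn]
    · rw [hft x ⟨hx0, hx1⟩ α hsort]
      congr 1
      have e1 : ∀ i : Fin d,
          x (α i) = (fun n => if h : n < d then x (α ⟨n, h⟩) else 0) (i : ℕ) := by
        intro i; simp [i.isLt]
      calc ∑ i : Fin d, (f (lovaszLevel d α ((i : ℕ) + 1)) - f (lovaszLevel d α (i : ℕ))) * x (α i)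
          = ∑ i : Fin d, (f (lovaszLevel d α ((i : ℕ) + 1)) - f (lovaszLevel d α (i : ℕ))) *
              (fun n => if h : n < d then x (α ⟨n, h⟩) else 0) (i : ℕ) := by
            exact Finset.sum_congr rfl (fun i _ => by rw [← e1 i])
        _ = _ := Fin.sum_univ_eq_sum_range
            (fun n => (f (lovaszLevel d α (n + 1)) - f (lovaszLevel d α n)) *
              (fun n => if h : n < d then x (α ⟨n, h⟩) else 0) n) d
  -- Part 1: agreement on vertices
  have hA : ∀ x : Fin d → ℝ, (∀ i, x i = 0 ∨ x i = 1) → ft x = f x := by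
    intro x hx
    obtain ⟨α, Y, hYx, hYtop, hYanti, hY1, hY0, hsum⟩ := hsetup x (hVIcc x hx)
    have hY01 : ∀ n, Y n = 0 ∨ Y n = 1 := by
      intro n
      by_cases hn : n < d
      · have := hYx ⟨n, hn⟩; rw [show ((⟨n, hn⟩ : Fin d) : ℕ) = n from rfl] at this
        rw [this]; exact hx _
      · exact Or.inl (hYtop n (le_of_not_gt hn))
    set cnt : ℕ := ((Finset.range d).filter (fun i => Y i = 1)).card with hcnt
    have hcnt_le : cnt ≤ d := by
      calc cnt ≤ (Finset.range d).card := Finset.card_filter_le _ _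
        _ = d := Finset.card_range d
    have hchar : ∀ i, (Y i = 1 ↔ i < cnt) := by
      intro i
      constructor
      · intro hYi
        have hid : i < d := by
          by_contra hid
          rw [hYtop i (le_of_not_gt hid)] at hYi; norm_num at hYi
        have hsubset : Finset.range (i + 1) ⊆ (Finset.range d).filter (fun j => Y j = 1) := by
          intro j hj
          have hj' : j ≤ i := Nat.lt_succ_iff.mp (Finset.mem_range.mp hj)
          have h1 : Y i ≤ Y j := hYanti j i hj'
          rw [hYi] at h1
          rcases hY01 j with h | h
          · rw [h] at h1; norm_num at h1
          · exact Finset.mem_filter.mpr ⟨Finset.mem_range.mpr (lt_of_le_of_lt hj' hid), h⟩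
        have := Finset.card_le_card hsubset
        rw [Finset.card_range] at this
        omega
      · intro hicnt
        by_contra hYi
        have hYi0 : Y i = 0 := (hY01 i).resolve_right hYi
        have hsubset : (Finset.range d).filter (fun j => Y j = 1) ⊆ Finset.range i := by
          intro j hj
          obtain ⟨hjd, hj1⟩ := Finset.mem_filter.mp hj
          by_contra hji
          have hij : i ≤ j := le_of_not_gt (fun h => hji (Finset.mem_range.mpr h))
          have h1 : Y j ≤ Y i := hYanti i j hij
          rw [hYi0, hj1] at h1; norm_num at h1
        have := Finset.card_le_card hsubset
        rw [Finset.card_range] at this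
        omega
    have hxeq : x = lovaszLevel d α cnt := by
      funext j
      have h1 : x j = Y ((α.symm j : ℕ)) := by
        rw [hYx (α.symm j), Equiv.apply_symm_apply]
      unfold lovaszLevel
      rcases hx j with h | h
      · rw [h]
        rw [h] at h1
        have : ¬ ((α.symm j : ℕ) < cnt) := by
          intro hc
          have := (hchar _).mpr hc
          rw [← h1] at this; norm_num at this
        simp [this]
      · rw [h]
        rw [h] at h1
        have : (α.symm j : ℕ) < cnt := (hchar _).mp h1.symm
        simp [this]
    -- compute the sum
    have hsum2 : ∑ i ∈ Finset.range d, (f (lovaszLevel d α (i + 1)) - f (lovaszLevel d α i)) * Y i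
        = ∑ i ∈ Finset.range cnt, (f (lovaszLevel d α (i + 1)) - f (lovaszLevel d α i)) := by
      rw [← Finset.sum_subset (Finset.range_subset_range.mpr hcnt_le)
        (fun i _ hi => ?_)]
      · apply Finset.sum_congr rfl
        intro i hi
        rw [(hchar i).mpr (Finset.mem_range.mp hi), mul_one]
      · have : ¬ (i < cnt) := fun h => hi (Finset.mem_range.mpr h)
        have hYi0 : Y i = 0 := by
          rcases hY01 i with h | h
          · exact h
          · exact absurd ((hchar i).mp h) this
        rw [hYi0, mul_zero]
    rw [hsum, hsum2, Finset.sum_range_sub (fun n => f (lovaszLevel d α n)) cnt, hxeq]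
    ring
  -- Part 2: lower bound on the cube
  have hB : ∀ x : Fin d → ℝ, x ∈ Set.Icc (0 : Fin d → ℝ) 1 → m ≤ ft x := by
    intro x hx
    obtain ⟨α, Y, hYx, hYtop, hYanti, hY1, hY0, hsum⟩ := hsetup x hx
    rw [hsum]
    exact lovasz_lower m (fun n => f (lovaszLevel d α n)) Y
      (fun n => hmle _ (lovaszLevel_vertex d α n)) hY1 hY0 hYanti d
  refine ⟨hA, le_antisymm ?_ ?_⟩
  · apply csInf_le_csInf
    · exact ⟨m, fun y ⟨x, hx, hxy⟩ => hxy ▸ hB x hx⟩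
    · exact hVne.image f
    · rintro y ⟨v, hv, rfl⟩
      exact ⟨v, hVIcc v hv, hA v hv⟩
  · apply le_csInf
    · exact ⟨ft 0, ⟨0, by constructor <;> intro i <;> norm_num, rfl⟩⟩
    · rintro b ⟨x, hx, rfl⟩
      exact hB x hx
end
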